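/- Assume ∫_0^1 D(u)f(u) du = 0 and let φ be the stationary Nagumo front with arrival point ω₀. Then there exists a uniform constant C > 0 such that |D(φ(x)) φ_xx(x)/φ_x(x)| ≤ C for all x ∈ (−∞, ω₀); equivalently, the function x ↦ D(φ)φ_xx/φ_x, extended by 0 on [ω₀,∞), is bounded on ℝ. -/

import Mathlib

open MeasureTheory Filter Topology Asymptotics

noncomputable section

/-- Bistable (Nagumo) reaction-diffusion data: a degenerate diffusion coefficient `D`
(`D(0)=0`, `D>0` on `(0,1]`, `D'>0` on `[0,1]`, `D` of class `C²`) and a bistable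
reaction `f` of Nagumo type with zeros `0, α, 1`. -/
structure NagumoSetup : Type where
  D : ℝ → ℝ
  f : ℝ → ℝ
  α : ℝ
  hα : α ∈ Set.Ioo (0:ℝ) 1
  hD_C2 : ContDiff ℝ 2 D
  hD0 : D 0 = 0
  hD_pos : ∀ u ∈ Set.Ioc (0:ℝ) 1, 0 < D u
  hD'_pos : ∀ u ∈ Set.Icc (0:ℝ) 1, 0 < deriv D u
  hf_C2 : ContDiff ℝ 2 f
  hf0 : f 0 = 0
  hfα : f α = 0
  hf1 : f 1 = 0
  hf'0 : deriv f 0 < 0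
  hf'1 : deriv f 1 < 0
  hf'α : 0 < deriv f α
  hf_pos : ∀ u ∈ Set.Ioo α 1, 0 < f u
  hf_neg : ∀ u ∈ Set.Ioo (0:ℝ) α, f u < 0

/-- The stationary (speed `c = 0`) Nagumo front: a nonincreasing `C¹` solution of
`(D(φ)φ_x)_x + f(φ) = 0` on `ℝ` with `φ(-∞) = 1` and `φ(+∞) = 0`. -/
structure StatFront (S : NagumoSetup) (φ : ℝ → ℝ) : Prop where
  hC1 : ContDiff ℝ 1 φ
  hflux : Differentiable ℝ fun x => S.D (φ x) * deriv φ x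
  hode : ∀ x, deriv (fun y => S.D (φ y) * deriv φ y) x + S.f (φ x) = 0
  hmono : Antitone φ
  hbot : Tendsto φ atBot (𝓝 1)
  htop : Tendsto φ atTop (𝓝 0)

/-- `ω₀` is the (finite) arrival point of the front to the degenerate state:
`φ ≡ 0` on `[ω₀, ∞)` and `φ_x < 0` on `(-∞, ω₀)`. -/
structure Arrival (φ : ℝ → ℝ) (ω₀ : ℝ) : Prop where
  hzero : ∀ x, ω₀ ≤ x → φ x = 0
  hneg : ∀ x, x < ω₀ → deriv φ x < 0

/-!
Write `G = S.potential`, `G u = ∫₀ᵘ D f`. Along the front the flux `P = D(φ) φ_x` satisfies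
`P_x = -f(φ)`, so `P² + 2 G(φ)` is constant; evaluating at the arrival point, where `φ = 0`,
gives the first integral `(D(φ) φ_x)² = -2 G(φ)`. Differentiating `φ_x = P / D(φ)` yields
`D(φ) φ_xx / φ_x = -(f(φ) / φ_x + D'(φ) φ_x)`, and by the first integral both terms are bounded
as soon as `(D f)² ≤ K (-G)` and `-G ≤ K D²` on `(0, 1)`. The hypothesis `G 1 = 0` makes `-G`
positive on `(0, 1)`; near `0` one has `D f ~ u²`, `-G ~ u³`, `D ~ u`, near `1` one has
`D f ~ 1 - u`, `-G ~ (1 - u)²`, and in between the ratios are continuous on a compact interval.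
-/

open Set

theorem exists_forall_le_mul_of_eventually {A B : ℝ → ℝ} {a b : ℝ}
    (hA : ContinuousOn A (Ioo a b)) (hB : ContinuousOn B (Ioo a b))
    (hB₀ : ∀ x ∈ Ioo a b, 0 < B x)
    (ha : ∃ K, ∀ᶠ x in 𝓝[>] a, A x ≤ K * B x) (hb : ∃ K, ∀ᶠ x in 𝓝[<] b, A x ≤ K * B x) :
    ∃ K, ∀ x ∈ Ioo a b, A x ≤ K * B x := by
  obtain ⟨Ka, ha⟩ := ha
  obtain ⟨Kb, hb⟩ := hb
  obtain ⟨a', ha', hKa⟩ := mem_nhdsGT_iff_exists_Ioo_subset.mp ha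
  obtain ⟨b', hb', hKb⟩ := mem_nhdsLT_iff_exists_Ioo_subset.mp hb
  have hsub : Icc a' b' ⊆ Ioo a b := Icc_subset_Ioo ha' hb'
  obtain ⟨Km, hKm⟩ := isCompact_Icc.bddAbove_image <|
    (hA.div hB fun x hx => (hB₀ x hx).ne').mono hsub
  refine ⟨max Ka (max Kb Km), fun x hx => ?_⟩
  have hmono : ∀ K ≤ max Ka (max Kb Km), A x ≤ K * B x → A x ≤ max Ka (max Kb Km) * B x :=
    fun K hK h => h.trans (by gcongr; exact (hB₀ x hx).le)
  rcases lt_or_ge x a' with hxa | hxa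
  · exact hmono Ka (le_max_left _ _) (hKa ⟨hx.1, hxa⟩)
  rcases lt_or_ge b' x with hxb | hxb
  · exact hmono Kb (le_max_of_le_right (le_max_left _ _)) (hKb ⟨hxb, hx.2⟩)
  · exact hmono Km (le_max_of_le_right (le_max_right _ _))
      ((div_le_iff₀ (hB₀ x hx)).mp (hKm ⟨x, ⟨hxa, hxb⟩, rfl⟩))

theorem HasDerivAt.eventually_nhdsGT_mul_sub_lt {h : ℝ → ℝ} {h' a c₁ c₂ : ℝ}
    (hh : HasDerivAt h h' a) (h₁ : c₁ < h') (h₂ : h' < c₂) :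
    ∀ᶠ t in 𝓝[>] a, c₁ * (t - a) < h t - h a ∧ h t - h a < c₂ * (t - a) := by
  have hslope : ∀ᶠ t in 𝓝[>] a, slope h a t ∈ Ioo c₁ c₂ :=
    nhdsWithin_mono _ (fun t ht => ne_of_gt ht)
      (hasDerivAt_iff_tendsto_slope.mp hh (Ioo_mem_nhds h₁ h₂))
  filter_upwards [hslope, self_mem_nhdsWithin] with t ht (hat : a < t)
  rw [slope_def_field, mem_Ioo, lt_div_iff₀ (sub_pos.mpr hat), div_lt_iff₀ (sub_pos.mpr hat)] at ht
  exact ht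

theorem HasDerivAt.eventually_nhdsLT_mul_sub_lt {h : ℝ → ℝ} {h' a c₁ c₂ : ℝ}
    (hh : HasDerivAt h h' a) (h₁ : c₁ < h') (h₂ : h' < c₂) :
    ∀ᶠ t in 𝓝[<] a, c₂ * (t - a) < h t - h a ∧ h t - h a < c₁ * (t - a) := by
  have hslope : ∀ᶠ t in 𝓝[<] a, slope h a t ∈ Ioo c₁ c₂ :=
    nhdsWithin_mono _ (fun t ht => ne_of_lt ht)
      (hasDerivAt_iff_tendsto_slope.mp hh (Ioo_mem_nhds h₁ h₂))
  filter_upwards [hslope, self_mem_nhdsWithin] with t ht (hta : t < a)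
  rw [slope_def_field, mem_Ioo, lt_div_iff_of_neg (sub_neg.mpr hta),
    div_lt_iff_of_neg (sub_neg.mpr hta)] at ht
  exact ht.symm

namespace NagumoSetup

variable (S : NagumoSetup)

theorem differentiable_D : Differentiable ℝ S.D := S.hD_C2.differentiable two_ne_zero

theorem differentiable_f : Differentiable ℝ S.f := S.hf_C2.differentiable two_ne_zero

theorem continuous_D_mul_f : Continuous fun t => S.D t * S.f t :=
  S.hD_C2.continuous.mul S.hf_C2.continuous

def potential (u : ℝ) : ℝ := ∫ t in (0:ℝ)..u, S.D t * S.f t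

theorem hasDerivAt_potential (u : ℝ) : HasDerivAt S.potential (S.D u * S.f u) u :=
  intervalIntegral.integral_hasDerivAt_right (S.continuous_D_mul_f.intervalIntegrable _ _)
    (S.continuous_D_mul_f.stronglyMeasurableAtFilter _ _) S.continuous_D_mul_f.continuousAt

theorem continuous_potential : Continuous S.potential :=
  continuous_iff_continuousAt.mpr fun u => (S.hasDerivAt_potential u).continuousAt

theorem potential_zero : S.potential 0 = 0 := intervalIntegral.integral_same

theorem neg_potential_eq_integral (u : ℝ) :
    -S.potential u = ∫ t in (0:ℝ)..u, -(S.D t * S.f t) := by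
  rw [potential, intervalIntegral.integral_neg]

theorem neg_potential_eq_integral_to_one (hDf : ∫ u in (0:ℝ)..1, S.D u * S.f u = 0) (u : ℝ) :
    -S.potential u = ∫ t in u..1, S.D t * S.f t := by
  rw [← intervalIntegral.integral_add_adjacent_intervals (b := u)
    (S.continuous_D_mul_f.intervalIntegrable _ _)
    (S.continuous_D_mul_f.intervalIntegrable _ _)] at hDf
  rw [potential]
  linarith

theorem potential_neg (hDf : ∫ u in (0:ℝ)..1, S.D u * S.f u = 0) {u : ℝ} (hu : u ∈ Ioo 0 1) :
    S.potential u < 0 := by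
  have hα₁ := S.hα.2
  rw [← neg_pos]
  rcases le_or_gt u S.α with hα | hα
  · rw [neg_potential_eq_integral]
    exact intervalIntegral.intervalIntegral_pos_of_pos_on
      (S.continuous_D_mul_f.neg.intervalIntegrable _ _) (fun t ht => neg_pos.mpr <|
        mul_neg_of_pos_of_neg (S.hD_pos t ⟨ht.1, by linarith [ht.2]⟩)
          (S.hf_neg t ⟨ht.1, ht.2.trans_le hα⟩)) hu.1
  · rw [S.neg_potential_eq_integral_to_one hDf]
    exact intervalIntegral.intervalIntegral_pos_of_pos_on
      (S.continuous_D_mul_f.intervalIntegrable _ _) (fun t ht => mul_pos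
        (S.hD_pos t ⟨hu.1.trans ht.1, ht.2.le⟩) (S.hf_pos t ⟨hα.trans ht.1, ht.2⟩)) hu.2

theorem exists_bounds_on_Ioo_zero :
    ∃ δ > 0, ∃ d > 0, ∃ c > 0, ∀ t ∈ Ioo 0 δ, d * t ≤ S.D t ∧
      c * t ^ 2 ≤ -(S.D t * S.f t) ∧ -(S.D t * S.f t) ≤ 16 * c * t ^ 2 := by
  have hD := (S.differentiable_D 0).hasDerivAt
  have hf := (S.differentiable_f 0).hasDerivAt
  have hd : 0 < deriv S.D 0 := S.hD'_pos 0 ⟨le_rfl, zero_le_one⟩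
  have he : deriv S.f 0 < 0 := S.hf'0
  generalize deriv S.D 0 = d at hD hd
  generalize deriv S.f 0 = e at hf he
  obtain ⟨δ, hδ, hlin⟩ := mem_nhdsGT_iff_exists_Ioo_subset.mp <|
    (hD.eventually_nhdsGT_mul_sub_lt (half_lt_self hd) (lt_two_mul_self hd)).and
    (hf.eventually_nhdsGT_mul_sub_lt (c₁ := 2 * e) (c₂ := e / 2) (by linarith) (by linarith))
  refine ⟨δ, hδ, d / 2, half_pos hd, d * -e / 4, div_pos (mul_pos hd (neg_pos.mpr he)) four_pos,
    fun t ht => ?_⟩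
  obtain ⟨⟨hD₁, hD₂⟩, hf₁, hf₂⟩ := hlin ht
  simp only [sub_zero, S.hD0, S.hf0] at hD₁ hD₂ hf₁ hf₂
  have hft : 0 < -e / 2 * t := mul_pos (by linarith) ht.1
  refine ⟨hD₁.le, ?_, ?_⟩
  · calc d * -e / 4 * t ^ 2 = d / 2 * t * (-e / 2 * t) := by ring
      _ ≤ S.D t * -S.f t := mul_le_mul hD₁.le (by linarith) hft.le (by linarith)
      _ = -(S.D t * S.f t) := by ring
  · calc -(S.D t * S.f t) = S.D t * -S.f t := by ring
      _ ≤ 2 * d * t * (-2 * e * t) := mul_le_mul hD₂.le (by linarith) (by linarith) (by linarith)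
      _ = 16 * (d * -e / 4) * t ^ 2 := by ring

theorem exists_bounds_nhdsGT_zero :
    ∃ K, ∀ᶠ u in 𝓝[>] 0,
      (S.D u * S.f u) ^ 2 ≤ K * -S.potential u ∧ -S.potential u ≤ K * S.D u ^ 2 := by
  obtain ⟨δ, hδ, d, hd, c, hc, hpt⟩ := S.exists_bounds_on_Ioo_zero
  have hint : ∀ u k : ℝ, ∫ t in (0:ℝ)..u, k * t ^ 2 = k * u ^ 3 / 3 := fun u k => by
    rw [intervalIntegral.integral_const_mul, integral_pow]
    ring
  have hquad : ∀ k : ℝ, Continuous fun t : ℝ => k * t ^ 2 := fun k => by fun_prop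
  have hcont : Continuous fun t : ℝ => -(S.D t * S.f t) := S.continuous_D_mul_f.neg
  refine ⟨768 * c + 16 * c / (3 * d ^ 2), ?_⟩
  filter_upwards [Ioo_mem_nhdsGT (lt_min hδ one_pos)] with u ⟨hu₀, hu⟩
  have huδ : u < δ := hu.trans_le (min_le_left _ _)
  have hu₁ : u < 1 := hu.trans_le (min_le_right _ _)
  have hlow : c * u ^ 3 / 3 ≤ -S.potential u := by
    rw [S.neg_potential_eq_integral, ← hint]
    exact intervalIntegral.integral_mono_on_of_le_Ioo hu₀.le ((hquad c).intervalIntegrable _ _)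
      (hcont.intervalIntegrable _ _) fun t ht => (hpt t ⟨ht.1, ht.2.trans huδ⟩).2.1
  have hup : -S.potential u ≤ 16 * c * u ^ 3 / 3 := by
    rw [S.neg_potential_eq_integral, ← hint]
    exact intervalIntegral.integral_mono_on_of_le_Ioo hu₀.le (hcont.intervalIntegrable _ _)
      ((hquad _).intervalIntegrable _ _) fun t ht => (hpt t ⟨ht.1, ht.2.trans huδ⟩).2.2
  obtain ⟨hDu, hP₁, hP₂⟩ := hpt u ⟨hu₀, huδ⟩
  have hG : 0 ≤ -S.potential u := le_trans (by positivity) hlow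
  have hu₃ : u ^ 3 ≤ u ^ 2 := pow_le_pow_of_le_one hu₀.le hu₁.le (by norm_num)
  constructor
  · calc (S.D u * S.f u) ^ 2 = (-(S.D u * S.f u)) ^ 2 := (neg_sq _).symm
      _ ≤ (16 * c * u ^ 2) ^ 2 := pow_le_pow_left₀ (le_trans (by positivity) hP₁) hP₂ 2
      _ = 256 * c ^ 2 * u * u ^ 3 := by ring
      _ ≤ 256 * c ^ 2 * 1 * u ^ 3 := by gcongr
      _ ≤ 768 * c * -S.potential u := by nlinarith
      _ ≤ _ := by gcongr; exact le_add_of_nonneg_right (by positivity)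
  · calc -S.potential u ≤ 16 * c * u ^ 3 / 3 := hup
      _ ≤ 16 * c * u ^ 2 / 3 := by gcongr
      _ = 16 * c / (3 * d ^ 2) * (d * u) ^ 2 := by field_simp
      _ ≤ 16 * c / (3 * d ^ 2) * S.D u ^ 2 := by gcongr
      _ ≤ _ := by gcongr; exact le_add_of_nonneg_left (by positivity)

theorem exists_bounds_on_Ioo_one :
    ∃ δ < (1:ℝ), ∃ c > 0, ∀ t ∈ Ioo δ 1,
      c * (1 - t) ≤ S.D t * S.f t ∧ S.D t * S.f t ≤ 16 * c * (1 - t) := by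
  have hf := (S.differentiable_f 1).hasDerivAt
  have he : deriv S.f 1 < 0 := S.hf'1
  generalize deriv S.f 1 = e at hf he
  have hD₁ : 0 < S.D 1 := S.hD_pos 1 ⟨one_pos, le_rfl⟩
  obtain ⟨δ, hδ, hlin⟩ := mem_nhdsLT_iff_exists_Ioo_subset.mp <|
    (hf.eventually_nhdsLT_mul_sub_lt (c₁ := 2 * e) (c₂ := e / 2) (by linarith) (by linarith)).and
    (nhdsWithin_le_nhds <| S.hD_C2.continuous.continuousAt.tendsto <|
      Ioo_mem_nhds (half_lt_self hD₁) (lt_two_mul_self hD₁))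
  refine ⟨δ, hδ, S.D 1 * -e / 4, div_pos (mul_pos hD₁ (neg_pos.mpr he)) four_pos,
    fun t ht => ?_⟩
  obtain ⟨⟨hf₁, hf₂⟩, hDt₁, hDt₂⟩ := hlin ht
  simp only [S.hf1, sub_zero] at hf₁ hf₂
  have hft : 0 < -e / 2 * (1 - t) := mul_pos (by linarith) (sub_pos.mpr ht.2)
  constructor
  · calc S.D 1 * -e / 4 * (1 - t) = S.D 1 / 2 * (-e / 2 * (1 - t)) := by ring
      _ ≤ S.D t * S.f t := mul_le_mul hDt₁.le (by linarith) hft.le (by linarith)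
  · calc S.D t * S.f t ≤ 2 * S.D 1 * (-2 * e * (1 - t)) :=
        mul_le_mul hDt₂.le (by linarith) (by linarith) (by linarith)
      _ = 16 * (S.D 1 * -e / 4) * (1 - t) := by ring

theorem exists_sq_le_mul_neg_potential_nhdsLT_one (hDf : ∫ u in (0:ℝ)..1, S.D u * S.f u = 0) :
    ∃ K, ∀ᶠ u in 𝓝[<] 1, (S.D u * S.f u) ^ 2 ≤ K * -S.potential u := by
  obtain ⟨δ, hδ, c, hc, hpt⟩ := S.exists_bounds_on_Ioo_one
  refine ⟨512 * c, ?_⟩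
  filter_upwards [Ioo_mem_nhdsLT hδ] with u hu
  have hint : ∫ t in u..1, c * (1 - t) = c * (1 - u) ^ 2 / 2 := by
    rw [intervalIntegral.integral_comp_sub_left (fun x => c * x), sub_self,
      intervalIntegral.integral_const_mul, integral_id]
    ring
  have hlow : c * (1 - u) ^ 2 / 2 ≤ -S.potential u := by
    rw [S.neg_potential_eq_integral_to_one hDf, ← hint]
    exact intervalIntegral.integral_mono_on_of_le_Ioo hu.2.le
      ((by fun_prop : Continuous fun t : ℝ => c * (1 - t)).intervalIntegrable _ _)
      (S.continuous_D_mul_f.intervalIntegrable _ _) fun t ht => (hpt t ⟨hu.1.trans ht.1, ht.2⟩).1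
  obtain ⟨hP₁, hP₂⟩ := hpt u hu
  calc (S.D u * S.f u) ^ 2 ≤ (16 * c * (1 - u)) ^ 2 :=
        pow_le_pow_left₀ (le_trans (by nlinarith [hu.2]) hP₁) hP₂ 2
    _ = 512 * c * (c * (1 - u) ^ 2 / 2) := by ring
    _ ≤ 512 * c * -S.potential u := by gcongr

theorem exists_neg_potential_le_mul_sq_nhdsLT_one :
    ∃ K, ∀ᶠ u in 𝓝[<] 1, -S.potential u ≤ K * S.D u ^ 2 := by
  have hD₁ : S.D 1 ^ 2 ≠ 0 := pow_ne_zero 2 (S.hD_pos 1 ⟨one_pos, le_rfl⟩).ne'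
  have hcont : ContinuousAt (fun u => -S.potential u / S.D u ^ 2) 1 :=
    S.continuous_potential.neg.continuousAt.div
      (S.hD_C2.continuous.continuousAt.pow 2) hD₁
  refine ⟨-S.potential 1 / S.D 1 ^ 2 + 1, ?_⟩
  filter_upwards [nhdsWithin_le_nhds (hcont.eventually (gt_mem_nhds (lt_add_one _))),
    nhdsWithin_le_nhds ((S.hD_C2.continuous.continuousAt.pow 2).eventually_ne hD₁)] with u hu hDu
  exact (div_le_iff₀ (lt_of_le_of_ne (sq_nonneg _) hDu.symm)).mp hu.le

theorem exists_sq_le_mul_neg_potential (hDf : ∫ u in (0:ℝ)..1, S.D u * S.f u = 0) :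
    ∃ K, ∀ u ∈ Ioo 0 1, (S.D u * S.f u) ^ 2 ≤ K * -S.potential u :=
  exists_forall_le_mul_of_eventually (S.continuous_D_mul_f.pow 2).continuousOn
    S.continuous_potential.neg.continuousOn (fun _ hu => neg_pos.mpr (S.potential_neg hDf hu))
    (S.exists_bounds_nhdsGT_zero.imp fun _ h => h.mono fun _ => And.left)
    (S.exists_sq_le_mul_neg_potential_nhdsLT_one hDf)

theorem exists_neg_potential_le_mul_sq :
    ∃ K, ∀ u ∈ Ioo 0 1, -S.potential u ≤ K * S.D u ^ 2 :=
  exists_forall_le_mul_of_eventually S.continuous_potential.neg.continuousOn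
    (S.hD_C2.continuous.pow 2).continuousOn (fun u hu => pow_pos (S.hD_pos u ⟨hu.1, hu.2.le⟩) 2)
    (S.exists_bounds_nhdsGT_zero.imp fun _ h => h.mono fun _ => And.right)
    S.exists_neg_potential_le_mul_sq_nhdsLT_one

end NagumoSetup

namespace StatFront

variable {S : NagumoSetup} {φ : ℝ → ℝ}

theorem differentiable (hφ : StatFront S φ) : Differentiable ℝ φ :=
  hφ.hC1.differentiable one_ne_zero

theorem hasDerivAt_flux (hφ : StatFront S φ) (x : ℝ) :
    HasDerivAt (fun y => S.D (φ y) * deriv φ y) (-S.f (φ x)) x := by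
  simpa only [eq_neg_of_add_eq_zero_left (hφ.hode x)] using (hφ.hflux x).hasDerivAt

theorem flux_sq_eq (hφ : StatFront S φ) {z : ℝ} (hz : φ z = 0) (x : ℝ) :
    (S.D (φ x) * deriv φ x) ^ 2 = -2 * S.potential (φ x) := by
  have hE : ∀ y, HasDerivAt
      (fun y => (S.D (φ y) * deriv φ y) ^ 2 + 2 * S.potential (φ y)) 0 y := fun y =>
    (((hφ.hasDerivAt_flux y).pow 2).add (((S.hasDerivAt_potential (φ y)).comp y
      (hφ.differentiable y).hasDerivAt).const_mul 2)).congr_deriv (by push_cast; ring)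
  have := is_const_of_deriv_eq_zero (fun y => (hE y).differentiableAt) (fun y => (hE y).deriv) x z
  simp only [hz, S.hD0, S.potential_zero, zero_mul, mul_zero, add_zero] at this
  linarith

theorem D_mul_deriv_deriv_div_eq (hφ : StatFront S φ) {x : ℝ}
    (hD : ∀ᶠ y in 𝓝 x, S.D (φ y) ≠ 0) (hp : deriv φ x ≠ 0) :
    S.D (φ x) * deriv (deriv φ) x / deriv φ x =
      -(S.f (φ x) / deriv φ x + deriv S.D (φ x) * deriv φ x) := by
  have hDx : S.D (φ x) ≠ 0 := hD.self_of_nhds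
  have hquot : HasDerivAt (fun y => S.D (φ y) * deriv φ y / S.D (φ y))
      ((-S.f (φ x) * S.D (φ x) - S.D (φ x) * deriv φ x * (deriv S.D (φ x) * deriv φ x)) /
        S.D (φ x) ^ 2) x :=
    (hφ.hasDerivAt_flux x).div
      ((S.differentiable_D _).hasDerivAt.comp x (hφ.differentiable x).hasDerivAt) hDx
  have heq : deriv φ =ᶠ[𝓝 x] fun y => S.D (φ y) * deriv φ y / S.D (φ y) :=
    hD.mono fun y hy => by field_simp
  rw [heq.deriv_eq, hquot.deriv]
  field_simp
  ring

end StatFront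

theorem Arrival.pos_of_lt {φ : ℝ → ℝ} {ω₀ : ℝ} (hω : Arrival φ ω₀) (hφ : Continuous φ) {x : ℝ}
    (hx : x < ω₀) : 0 < φ x := by
  have := strictAntiOn_of_deriv_neg (convex_Icc x ω₀) hφ.continuousOn
    (fun y hy => hω.hneg y (by rw [interior_Icc] at hy; exact hy.2)) ⟨le_rfl, hx.le⟩
    ⟨hx.le, le_rfl⟩ hx
  rwa [hω.hzero ω₀ le_rfl] at this

theorem sq_div_le_of_sq_mul_eq {D F p G K : ℝ} (hD : 0 < D) (hp : p ≠ 0)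
    (hE : (D * p) ^ 2 = -2 * G) (h : (D * F) ^ 2 ≤ K * -G) : (F / p) ^ 2 ≤ K / 2 := by
  rw [div_pow, div_le_iff₀ (by positivity)]
  refine le_of_mul_le_mul_right ?_ (pow_pos hD 2)
  calc F ^ 2 * D ^ 2 = (D * F) ^ 2 := by ring
    _ ≤ K * -G := h
    _ = K / 2 * p ^ 2 * D ^ 2 := by linear_combination (-K / 2) * hE

theorem sq_le_of_sq_mul_eq {D p G K : ℝ} (hD : 0 < D)
    (hE : (D * p) ^ 2 = -2 * G) (h : -G ≤ K * D ^ 2) : p ^ 2 ≤ 2 * K := by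
  refine le_of_mul_le_mul_right ?_ (pow_pos hD 2)
  linear_combination hE + 2 * h

/-- The coefficient `D(φ) φ_xx / φ_x` is uniformly bounded on `(-∞, ω₀)`. -/
theorem statement7 (S : NagumoSetup)
    (hDf : (∫ u in (0:ℝ)..1, S.D u * S.f u) = 0)
    (φ : ℝ → ℝ) (ω₀ : ℝ) (hφ : StatFront S φ)
    (hrange : ∀ x, 0 ≤ φ x ∧ φ x < 1) (hω : Arrival φ ω₀) :
    ∃ C : ℝ, 0 < C ∧ ∀ x, x < ω₀ → |S.D (φ x) * deriv (deriv φ) x / deriv φ x| ≤ C := by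
  obtain ⟨K₁, hK₁⟩ := S.exists_sq_le_mul_neg_potential hDf
  obtain ⟨K₂, hK₂⟩ := S.exists_neg_potential_le_mul_sq
  obtain ⟨M, hM⟩ := (isCompact_Icc (a := (0:ℝ)) (b := 1)).exists_bound_of_continuousOn
    (S.hD_C2.continuous_deriv one_le_two).continuousOn
  have hM₀ : 0 ≤ M := (norm_nonneg _).trans (hM 0 ⟨le_rfl, zero_le_one⟩)
  have hmem : ∀ x < ω₀, φ x ∈ Ioo 0 1 := fun x hx =>
    ⟨hω.pos_of_lt hφ.hC1.continuous hx, (hrange x).2⟩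
  have hDpos : ∀ x < ω₀, 0 < S.D (φ x) := fun x hx => S.hD_pos _ (Ioo_subset_Ioc_self (hmem x hx))
  refine ⟨√(K₁ / 2) + M * √(2 * K₂) + 1, by positivity, fun x hx => ?_⟩
  have hp : deriv φ x ≠ 0 := (hω.hneg x hx).ne
  have hE := hφ.flux_sq_eq (hω.hzero ω₀ le_rfl) x
  rw [hφ.D_mul_deriv_deriv_div_eq ((eventually_lt_nhds hx).mono fun y hy => (hDpos y hy).ne') hp,
    abs_neg]
  calc _ ≤ |S.f (φ x) / deriv φ x| + |deriv S.D (φ x)| * |deriv φ x| := by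
        rw [← abs_mul]; exact abs_add_le _ _
    _ ≤ √(K₁ / 2) + M * √(2 * K₂) := by
        gcongr
        · exact Real.abs_le_sqrt (sq_div_le_of_sq_mul_eq (hDpos x hx) hp hE (hK₁ _ (hmem x hx)))
        · exact hM _ ⟨(hmem x hx).1.le, (hmem x hx).2.le⟩
        · exact Real.abs_le_sqrt (sq_le_of_sq_mul_eq (hDpos x hx) hE (hK₂ _ (hmem x hx)))
    _ ≤ _ := le_add_of_nonneg_right zero_le_one
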